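/- arXiv:1612.05746 — 3 statements merged into one kernel-verified Lean document; each statement's English description precedes it below -/
import Mathlib

section
/- For any S ⊆ ℕ, let X = (X_m, m ≥ 0) be a discrete time combinatorial Lévy process on 2^S. Then there exists a unique probability measure μ on 2^S such that X has the same finite-dimensional distributions as the random walk started at ∅ with increment distribution μ, i.e. X_m =_D X_{m−1} Δ Δ_m for every m ≥ 1, where Δ_1, Δ_2, ... are i.i.d. with law μ. -/
/-!
STATEMENT 0: every discrete time combinatorial Lévy process on `2^S` is, in the sense of
finite-dimensional distributions, a random walk started at `∅` driven by i.i.d. increments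
with a unique increment distribution `μ`.
-/

open MeasureTheory ProbabilityTheory Filter Topology
open scoped ENNReal NNReal
noncomputable section
namespace CLP

/-- A subset of the base set `S`, encoded as a Boolean function on `↥S`;
`2^S` carries the product (discrete) topology and the Borel σ-field. -/
abbrev Sub (α : Type) : Type := α → Bool

/-- symmetric difference `A Δ B` -/
def sd {α : Type} (A B : Sub α) : Sub α := fun i => xor (A i) (B i)

/-- the empty set -/
def emptySub (α : Type) : Sub α := fun _ => false

/-- A discrete time combinatorial Lévy process on `2^S` (base type `α = ↥S`):
`X_0 = ∅`, stationary increments and independent increments (w.r.t. `Δ`). -/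
structure IsDiscSetLevy {Ω : Type} [MeasurableSpace Ω] (α : Type)
    (X : ℕ → Ω → Sub α) (P : Measure Ω) : Prop where
  measurable : ∀ m, Measurable (X m)
  init : ∀ ω, X 0 ω = emptySub α
  stationary : ∀ s t : ℕ,
    P.map (fun ω => sd (X (t + s) ω) (X s ω)) = P.map (X t)
  indep : ∀ (r : ℕ) (ts : Fin (r + 1) → ℕ), Monotone ts →
    iIndepFun
      (fun (i : Fin r) ω => sd (X (ts i.succ) ω) (X (ts i.castSucc) ω)) P

/-- the random walk started at `∅` with increment sequence `D`:
`walk D m = Δ_1 Δ Δ_2 Δ ⋯ Δ Δ_m` (here `D m` plays the role of `Δ_{m+1}`). -/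
def walk {Ω' α : Type} (D : ℕ → Ω' → Sub α) : ℕ → Ω' → Sub α
  | 0 => fun _ => emptySub α
  | m + 1 => fun ω => sd (walk D m ω) (D m ω)

lemma measurable_sd {Ω α : Type} [MeasurableSpace Ω] {f g : Ω → Sub α}
    (hf : Measurable f) (hg : Measurable g) :
    Measurable (fun ω => sd (f ω) (g ω)) := by
  apply measurable_pi_lambda
  intro i
  have hxor : Measurable (fun p : Bool × Bool => xor p.1 p.2) :=
    fun s _ => (Set.to_countable _).measurableSet
  exact hxor.comp (((measurable_pi_apply i).comp hf).prodMk
    ((measurable_pi_apply i).comp hg))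

lemma sd_cancel {α : Type} (A B : Sub α) : sd A (sd B A) = B := by
  funext i
  simp [sd, Bool.xor_comm]

lemma sd_empty {α : Type} (A : Sub α) : sd (emptySub α) A = A := by
  funext i
  simp [sd, emptySub]

/-- **Theorem 2.4.** For any `S ⊆ ℕ`, a discrete time combinatorial Lévy process on `2^S`
has the same finite-dimensional distributions as a random walk started at `∅` with i.i.d.
increments drawn from a unique probability measure `μ` on `2^S`. -/
theorem set_valued_random_walk_representation
    (S : Set ℕ) {Ω : Type} [MeasurableSpace Ω] (P : Measure Ω) [IsProbabilityMeasure P]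
    (X : ℕ → Ω → Sub ↥S) (hX : IsDiscSetLevy ↥S X P) :
    ∃! μ : Measure (Sub ↥S), IsProbabilityMeasure μ ∧
      ∃ (Ω' : Type) (_ : MeasurableSpace Ω') (P' : Measure Ω') (_ : IsProbabilityMeasure P')
        (D : ℕ → Ω' → Sub ↥S),
        iIndepFun D P' ∧
        (∀ m : ℕ, P'.map (D m) = μ) ∧
        (∀ (r : ℕ) (ts : Fin r → ℕ),
          P.map (fun ω (i : Fin r) => X (ts i) ω) =
            P'.map (fun ω (i : Fin r) => walk D (ts i) ω)) := by
  classical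
  set D : ℕ → Ω → Sub ↥S := fun m ω => sd (X (m + 1) ω) (X m ω) with hD
  -- the walk driven by D recovers X
  have hwalk : ∀ m ω, walk D m ω = X m ω := by
    intro m
    induction m with
    | zero => intro ω; simp [walk, hX.init ω]
    | succ n ih =>
      intro ω
      show sd (walk D n ω) (D n ω) = X (n + 1) ω
      rw [ih ω]
      exact sd_cancel (X n ω) (X (n + 1) ω)
  -- marginals of D
  have hmargD : ∀ m : ℕ, P.map (D m) = P.map (X 1) := by
    intro m
    have := hX.stationary m 1
    rw [Nat.add_comm 1 m] at this
    exact this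
  -- independence of D
  have hindepD : iIndepFun D P := by
    rw [iIndepFun_iff_measure_inter_preimage_eq_mul]
    intro T sets hsets
    set r : ℕ := T.sup id + 1 with hr
    have hlt : ∀ m ∈ T, m < r := fun m hm =>
      Nat.lt_succ_of_le (Finset.le_sup (f := id) hm)
    have hmono : Monotone (fun i : Fin (r + 1) => (i : ℕ)) :=
      fun a b hab => hab
    have hind := hX.indep r (fun i => (i : ℕ)) hmono
    have hind' : iIndepFun
        (fun (i : Fin r) ω => D (i : ℕ) ω) P := hind
    have key := hind'.measure_inter_preimage_eq_mul
      (T.attachFin hlt) (sets := fun i : Fin r => sets (i : ℕ))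
      (fun i hi => hsets _ ((Finset.mem_attachFin hlt).1 hi))
    have hInter : (⋂ i ∈ T.attachFin hlt, (fun ω => D (i : ℕ) ω) ⁻¹' sets (i : ℕ))
        = ⋂ m ∈ T, D m ⁻¹' sets m := by
      ext x
      simp only [Set.mem_iInter, Finset.mem_attachFin]
      constructor
      · intro h m hm
        exact h ⟨m, hlt m hm⟩ hm
      · intro h i hi
        exact h _ hi
    have hProd : (∏ i ∈ T.attachFin hlt, P ((fun ω => D (i : ℕ) ω) ⁻¹' sets (i : ℕ)))
        = ∏ m ∈ T, P (D m ⁻¹' sets m) := by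
      refine Finset.prod_nbij (fun i : Fin r => (i : ℕ)) ?_ ?_ ?_ ?_
      · intro i hi; exact (Finset.mem_attachFin hlt).1 hi
      · intro a _ b _ hab
        exact Fin.ext hab
      · intro m hm
        exact ⟨⟨m, hlt m hm⟩, (Finset.mem_attachFin hlt).2 hm, rfl⟩
      · intro i _; rfl
    rw [hInter, hProd] at key
    exact key
  have hmeasX1 : Measurable (X 1) := hX.measurable 1
  refine ⟨P.map (X 1), ⟨?_, Ω, ‹MeasurableSpace Ω›, P, ‹IsProbabilityMeasure P›, D, ?_, ?_, ?_⟩, ?_⟩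
  · exact Measure.isProbabilityMeasure_map hmeasX1.aemeasurable
  · exact hindepD
  · exact hmargD
  · intro r ts
    congr 1
    funext ω i
    exact (hwalk (ts i) ω).symm
  · -- uniqueness
    rintro μ' ⟨hprob', Ω', mΩ', P', hP', D', hindep', hmarg', hfdd'⟩
    have h1 := hfdd' 1 (fun _ => 1)
    have hwalk1 : ∀ ω, walk D' 1 ω = D' 0 ω := fun ω => sd_empty (D' 0 ω)
    have he : Measurable (fun g : Fin 1 → Sub ↥S => g 0) := measurable_pi_apply 0
    have haeD : AEMeasurable (D' 0) P' := by
      refine aemeasurable_of_map_neZero ⟨?_⟩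
      rw [hmarg' 0]
      exact hprob'.ne_zero μ'
    have hfun : (fun ω (_ : Fin 1) => walk D' 1 ω)
        = (fun (x : Sub ↥S) (_ : Fin 1) => x) ∘ (D' 0) := by
      funext ω i
      exact hwalk1 ω
    have haeW : AEMeasurable (fun ω (_ : Fin 1) => walk D' 1 ω) P' := by
      rw [hfun]
      exact ((measurable_pi_lambda (fun (x : Sub ↥S) (_ : Fin 1) => x)
        fun _ => measurable_id).comp_aemeasurable haeD)
    have hL : (P.map (fun ω (_ : Fin 1) => X 1 ω)).map (fun g : Fin 1 → Sub ↥S => g 0)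
        = P.map (X 1) := by
      rw [Measure.map_map he (measurable_pi_lambda _ fun _ => hmeasX1)]
      rfl
    have hR : (P'.map (fun ω (_ : Fin 1) => walk D' 1 ω)).map (fun g : Fin 1 → Sub ↥S => g 0)
        = P'.map (D' 0) := by
      rw [AEMeasurable.map_map_of_aemeasurable he.aemeasurable haeW]
      congr 1
      funext ω
      exact hwalk1 ω
    calc μ' = P'.map (D' 0) := (hmarg' 0).symm
      _ = P.map (X 1) := by rw [← hL, ← hR, h1]



end CLP
end
end

section
/- An L_S-valued process X = (X_t, t ≥ 0) is a combinatorial Lévy process if and only if the restriction X^{S'} = (X_t|_{S'}, t ≥ 0) is a combinatorial Lévy process on L_{S'} for every S' ⊆ S. Moreover, an L_ℕ-valued process X is a combinatorial Lévy process if and only if X^{[n]} = (X_t|_{[n]}, t ≥ 0) is a combinatorial Lévy process on L_{[n]} for every n = 1, 2, ... -/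
/-!
STATEMENT 7 (Proposition 4.9): an `L_S`-valued process is a combinatorial Lévy process if
and only if every restriction to a subset `S' ⊆ S` is a combinatorial Lévy process on
`L_{S'}`; likewise, an `L_ℕ`-valued process is a combinatorial Lévy process iff each
restriction to `[n]` is one.
-/

open MeasureTheory ProbabilityTheory Filter Topology
open scoped ENNReal NNReal
noncomputable section
namespace CLP

abbrev Struct {k : ℕ} (ar : Fin k → ℕ) (α : Type) : Type :=
  ∀ j : Fin k, (Fin (ar j) → α) → Bool

variable {k : ℕ}

def pb {ar : Fin k → ℕ} {α β : Type} (f : β → α) (M : Struct ar α) : Struct ar β :=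
  fun j a => M j fun i => f (a i)

def inc {ar : Fin k → ℕ} {α : Type} (M M' : Struct ar α) : Struct ar α :=
  fun j a => xor (M j a) (M' j a)

def emptyS (ar : Fin k → ℕ) (α : Type) : Struct ar α := fun _ _ => false

/-- restriction of a structure on `ℕ` to `[n] = {0, …, n-1}` -/
def restr {ar : Fin k → ℕ} (n : ℕ) (M : Struct ar ℕ) : Struct ar (Fin n) :=
  pb (fun i : Fin n => (i : ℕ)) M

structure IsCombLevy {Ω : Type} [MeasurableSpace Ω] (ar : Fin k → ℕ) (α : Type)
    (X : ℝ≥0 → Ω → Struct ar α) (P : Measure Ω) : Prop where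
  measurable : ∀ t, Measurable (X t)
  init : ∀ ω, X 0 ω = emptyS ar α
  stationary : ∀ s t : ℝ≥0,
    P.map (fun ω => inc (X (t + s) ω) (X s ω)) = P.map (X t)
  indep : ∀ (r : ℕ) (ts : Fin (r + 1) → ℝ≥0), Monotone ts →
    iIndepFun
      (fun (i : Fin r) ω => inc (X (ts i.succ) ω) (X (ts i.castSucc) ω)) P
  cadlag_right : ∀ ω t, ContinuousWithinAt (fun u => X u ω) (Set.Ici t) t
  cadlag_left : ∀ ω t, ∃ L, Tendsto (fun u => X u ω) (𝓝[<] t) (𝓝 L)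

/-! ### Auxiliary lemmas -/

section Aux

variable {ar : Fin k → ℕ} {α β : Type}

lemma measurable_pb (f : β → α) : Measurable (pb (ar := ar) f) :=
  measurable_pi_lambda _ fun j => measurable_pi_lambda _ fun a =>
    (measurable_pi_apply (fun i => f (a i))).comp (measurable_pi_apply j)

lemma continuous_pb (f : β → α) : Continuous (pb (ar := ar) f) :=
  continuous_pi fun j => continuous_pi fun a =>
    (continuous_apply (fun i => f (a i))).comp (continuous_apply j)

lemma measurable_inc {Ω : Type} [MeasurableSpace Ω] {A B : Ω → Struct ar α}
    (hA : Measurable A) (hB : Measurable B) : Measurable fun ω => inc (A ω) (B ω) := by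
  apply measurable_pi_lambda; intro j; apply measurable_pi_lambda; intro a
  have h1 : Measurable fun ω => A ω j a :=
    (measurable_pi_apply a).comp ((measurable_pi_apply j).comp hA)
  have h2 : Measurable fun ω => B ω j a :=
    (measurable_pi_apply a).comp ((measurable_pi_apply j).comp hB)
  exact (measurable_of_countable fun p : Bool × Bool => xor p.1 p.2).comp (h1.prodMk h2)

/-- Lévy property transfers along pullbacks. -/
lemma IsCombLevy.pb_comp {Ω : Type} [MeasurableSpace Ω] {P : Measure Ω}
    {X : ℝ≥0 → Ω → Struct ar α} (h : IsCombLevy ar α X P) (f : β → α) :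
    IsCombLevy ar β (fun t ω => pb f (X t ω)) P where
  measurable t := (measurable_pb f).comp (h.measurable t)
  init ω := by rw [show X 0 ω = emptyS ar α from h.init ω]; rfl
  stationary s t := by
    have hg : Measurable fun ω => inc (X (t + s) ω) (X s ω) :=
      measurable_inc (h.measurable _) (h.measurable _)
    calc P.map (fun ω => inc (pb f (X (t + s) ω)) (pb f (X s ω)))
        = P.map (pb f ∘ fun ω => inc (X (t + s) ω) (X s ω)) := rfl
      _ = (P.map (fun ω => inc (X (t + s) ω) (X s ω))).map (pb f) :=
          (Measure.map_map (measurable_pb f) hg).symm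
      _ = (P.map (X t)).map (pb f) := by rw [h.stationary s t]
      _ = P.map (pb f ∘ X t) := Measure.map_map (measurable_pb f) (h.measurable t)
      _ = P.map (fun ω => pb f (X t ω)) := rfl
  indep r ts hts := (h.indep r ts hts).comp (fun _ => pb f) (fun _ => measurable_pb f)
  cadlag_right ω t :=
    (continuous_pb f).continuousAt.comp_continuousWithinAt (h.cadlag_right ω t)
  cadlag_left ω t := by
    obtain ⟨L, hL⟩ := h.cadlag_left ω t
    exact ⟨pb f L, ((continuous_pb f).tendsto L).comp hL⟩

/-! ### Machinery for the converse direction on `ℕ` -/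

/-- a strict bound for the finite tuple `a` -/
def bnd {m : ℕ} (a : Fin m → ℕ) : ℕ := (Finset.univ.sup a) + 1

lemma lt_bnd {m : ℕ} (a : Fin m → ℕ) (i : Fin m) : a i < bnd a :=
  Nat.lt_succ_of_le (Finset.le_sup (Finset.mem_univ i))

def liftF {m : ℕ} (a : Fin m → ℕ) : Fin m → Fin (bnd a) := fun i => ⟨a i, lt_bnd a i⟩

def restrFin {n m : ℕ} (h : n ≤ m) : Struct ar (Fin m) → Struct ar (Fin n) :=
  pb (Fin.castLE h)

lemma restrFin_restr {n m : ℕ} (h : n ≤ m) (M : Struct ar ℕ) :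
    restrFin (ar := ar) h (restr m M) = restr n M := rfl

lemma measurable_restr (n : ℕ) : Measurable (restr (ar := ar) n) := measurable_pb _

/-- cylinder sets: preimages of measurable sets under restrictions -/
def Cyl (ar : Fin k → ℕ) : Set (Set (Struct ar ℕ)) :=
  {s | ∃ n, ∃ A : Set (Struct ar (Fin n)), MeasurableSet A ∧ s = restr n ⁻¹' A}

lemma Cyl_inter {s t : Set (Struct ar ℕ)} (hs : s ∈ Cyl ar) (ht : t ∈ Cyl ar) :
    s ∩ t ∈ Cyl ar := by
  obtain ⟨n, A, hA, rfl⟩ := hs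
  obtain ⟨m, B, hB, rfl⟩ := ht
  refine ⟨max n m,
    restrFin (le_max_left n m) ⁻¹' A ∩ restrFin (le_max_right n m) ⁻¹' B,
    ((measurable_pb _) hA).inter ((measurable_pb _) hB), ?_⟩
  ext M
  exact Iff.rfl

lemma isPiSystem_Cyl : IsPiSystem (Cyl ar) := fun s hs t ht _ => Cyl_inter hs ht

lemma generateFrom_Cyl :
    MeasurableSpace.generateFrom (Cyl ar) = (MeasurableSpace.pi : MeasurableSpace (Struct ar ℕ)) := by
  apply le_antisymm
  · refine MeasurableSpace.generateFrom_le fun s hs => ?_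
    obtain ⟨n, A, hA, rfl⟩ := hs
    exact (measurable_restr n) hA
  · have hres : ∀ n, MeasurableSpace.comap (restr (ar := ar) n) MeasurableSpace.pi
        ≤ MeasurableSpace.generateFrom (Cyl ar) := by
      intro n s hs
      obtain ⟨A, hA, rfl⟩ := hs
      exact MeasurableSpace.measurableSet_generateFrom ⟨n, A, hA, rfl⟩
    show (⨆ j : Fin k,
        (MeasurableSpace.pi : MeasurableSpace ((Fin (ar j) → ℕ) → Bool)).comap
          fun M : Struct ar ℕ => M j) ≤ _
    refine iSup_le fun j => ?_
    show MeasurableSpace.comap (fun M : Struct ar ℕ => M j)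
        (⨆ a : Fin (ar j) → ℕ,
          (inferInstance : MeasurableSpace Bool).comap fun b => b a) ≤ _
    rw [MeasurableSpace.comap_iSup]
    refine iSup_le fun a => ?_
    rw [MeasurableSpace.comap_comp]
    have heq : ((fun b => b a) ∘ fun M : Struct ar ℕ => M j)
        = ((fun M' : Struct ar (Fin (bnd a)) => M' j (liftF a)) ∘ restr (bnd a)) := rfl
    rw [heq, ← MeasurableSpace.comap_comp]
    have hin : Measurable (fun M' : Struct ar (Fin (bnd a)) => M' j (liftF a)) :=
      (measurable_pi_apply (liftF a)).comp (measurable_pi_apply j)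
    exact le_trans (MeasurableSpace.comap_mono hin.comap_le) (hres (bnd a))

/-- Converse direction for the second statement: if all finite restrictions are
combinatorial Lévy processes, so is the full process. -/
lemma isCombLevy_of_restr {Ω : Type} [MeasurableSpace Ω] {P : Measure Ω}
    [IsProbabilityMeasure P] {X : ℝ≥0 → Ω → Struct ar ℕ}
    (h : ∀ n, IsCombLevy ar (Fin n) (fun t ω => restr n (X t ω)) P) :
    IsCombLevy ar ℕ X P := by
  have hXm : ∀ t, Measurable (X t) := by
    intro t
    apply measurable_pi_lambda; intro j; apply measurable_pi_lambda; intro a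
    have heq : (fun ω => X t ω j a)
        = (fun M : Struct ar (Fin (bnd a)) => M j (liftF a)) ∘ (fun ω => restr (bnd a) (X t ω)) :=
      rfl
    rw [heq]
    exact ((measurable_pi_apply (liftF a)).comp (measurable_pi_apply j)).comp
      ((h (bnd a)).measurable t)
  refine ⟨hXm, ?_, ?_, ?_, ?_, ?_⟩
  · -- init
    intro ω; funext j a
    exact congrFun (congrFun ((h (bnd a)).init ω) j) (liftF a)
  · -- stationary
    intro s t
    have hg : Measurable fun ω => inc (X (t + s) ω) (X s ω) :=
      measurable_inc (hXm _) (hXm _)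
    haveI : IsProbabilityMeasure (P.map (fun ω => inc (X (t + s) ω) (X s ω))) :=
      Measure.isProbabilityMeasure_map hg.aemeasurable
    haveI : IsProbabilityMeasure (P.map (X t)) :=
      Measure.isProbabilityMeasure_map (hXm t).aemeasurable
    refine ext_of_generate_finite (Cyl ar) generateFrom_Cyl.symm isPiSystem_Cyl ?_ ?_
    · rintro s' ⟨n, A, hA, rfl⟩
      have hg' : Measurable fun ω => inc (restr n (X (t + s) ω)) (restr n (X s ω)) :=
        measurable_inc ((measurable_restr n).comp (hXm _)) ((measurable_restr n).comp (hXm _))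
      rw [Measure.map_apply hg ((measurable_restr n) hA),
        Measure.map_apply (hXm t) ((measurable_restr n) hA)]
      have h1 : (fun ω => inc (X (t + s) ω) (X s ω)) ⁻¹' (restr n ⁻¹' A)
          = (fun ω => inc (restr n (X (t + s) ω)) (restr n (X s ω))) ⁻¹' A := rfl
      have h2 : X t ⁻¹' (restr n ⁻¹' A) = (fun ω => restr n (X t ω)) ⁻¹' A := rfl
      rw [h1, h2, ← Measure.map_apply hg' hA,
        ← Measure.map_apply ((h n).measurable t) hA]
      have := (h n).stationary s t
      exact congrFun (congrArg _ this) A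
    · simp [Measure.map_apply hg MeasurableSet.univ,
        Measure.map_apply (hXm t) MeasurableSet.univ]
  · -- indep
    intro r ts hts
    set f : Fin r → Ω → Struct ar ℕ :=
      fun i ω => inc (X (ts i.succ) ω) (X (ts i.castSucc) ω) with hf
    have hfm : ∀ i, Measurable (f i) := fun i => measurable_inc (hXm _) (hXm _)
    rw [iIndepFun_iff_iIndep]
    refine iIndepSets.iIndep (fun i => (hfm i).comap_le)
      (fun i => (fun s => f i ⁻¹' s) '' Cyl ar) (fun i => ?_) (fun i => ?_) ?_
    · -- pi systems
      rintro s ⟨s', hs', rfl⟩ t ⟨t', ht', rfl⟩ _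
      exact ⟨s' ∩ t', Cyl_inter hs' ht', rfl⟩
    · -- generate
      rw [← generateFrom_Cyl, MeasurableSpace.comap_generateFrom]
    · -- independence of the pi systems
      rw [iIndepSets_iff]
      intro S g hg
      choose s' hs' heq using hg
      choose n A hA hrepr using hs'
      set N : ℕ := S.sup fun i => if hi : i ∈ S then n i hi else 0 with hN
      have hnN : ∀ i (hi : i ∈ S), n i hi ≤ N := by
        intro i hi
        have := Finset.le_sup (f := fun i => if hi : i ∈ S then n i hi else 0) hi
        simpa [hi] using this
      set B : ∀ _ : Fin r, Set (Struct ar (Fin N)) :=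
        fun i => if hi : i ∈ S then restrFin (hnN i hi) ⁻¹' (A i hi) else Set.univ with hB
      have hBmeas : ∀ i ∈ S, MeasurableSet (B i) := by
        intro i hi
        simp only [hB, dif_pos hi]
        exact (measurable_pb _) (hA i hi)
      have key := ((h N).indep r ts hts).measure_inter_preimage_eq_mul S hBmeas
      have hgi : ∀ i ∈ S, g i
          = (fun ω => inc (restr N (X (ts i.succ) ω)) (restr N (X (ts i.castSucc) ω))) ⁻¹' B i := by
        intro i hi
        rw [← heq i hi, hrepr i hi]
        simp only [hB, dif_pos hi]
        rfl
      have h1 : (⋂ i ∈ S, g i)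
          = ⋂ i ∈ S,
            (fun ω => inc (restr N (X (ts i.succ) ω)) (restr N (X (ts i.castSucc) ω))) ⁻¹' B i :=
        Set.iInter₂_congr hgi
      rw [h1]
      refine key.trans ?_
      exact (Finset.prod_congr rfl fun i hi => by rw [hgi i hi]).symm
  · -- cadlag_right
    intro ω t
    show Tendsto (fun u => X u ω) (𝓝[Set.Ici t] t) (𝓝 (X t ω))
    rw [tendsto_pi_nhds]; intro j
    rw [tendsto_pi_nhds]; intro a
    have h0 : Tendsto (fun u => restr (bnd a) (X u ω)) (𝓝[Set.Ici t] t)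
        (𝓝 (restr (bnd a) (X t ω))) := (h (bnd a)).cadlag_right ω t
    rw [tendsto_pi_nhds] at h0
    have h0j := h0 j
    rw [tendsto_pi_nhds] at h0j
    exact h0j (liftF a)
  · -- cadlag_left
    intro ω t
    have hL : ∀ n, ∃ L, Tendsto (fun u => restr n (X u ω)) (𝓝[<] t) (𝓝 L) :=
      fun n => (h n).cadlag_left ω t
    choose L hLn using hL
    refine ⟨fun j a => L (bnd a) j (liftF a), ?_⟩
    rw [tendsto_pi_nhds]; intro j
    rw [tendsto_pi_nhds]; intro a
    have h0 := hLn (bnd a)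
    rw [tendsto_pi_nhds] at h0
    have h0j := h0 j
    rw [tendsto_pi_nhds] at h0j
    exact h0j (liftF a)

end Aux

/-- **Proposition 4.9.** Lévy property is equivalent to the Lévy property of all
restrictions. -/
theorem comb_levy_iff_restrictions
    (ar : Fin k → ℕ) (har : Monotone ar)
    {Ω : Type} [MeasurableSpace Ω] (P : Measure Ω) [IsProbabilityMeasure P] :
    (∀ (S : Set ℕ) (X : ℝ≥0 → Ω → Struct ar ↥S),
      IsCombLevy ar ↥S X P ↔
        ∀ (S' : Set ℕ) (h : S' ⊆ S),
          IsCombLevy ar ↥S' (fun t ω => pb (Set.inclusion h) (X t ω)) P) ∧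
    (∀ X : ℝ≥0 → Ω → Struct ar ℕ,
      IsCombLevy ar ℕ X P ↔
        ∀ n : ℕ, IsCombLevy ar (Fin n) (fun t ω => restr n (X t ω)) P) := by
  constructor
  · intro S X
    constructor
    · intro hX S' h
      exact hX.pb_comp (Set.inclusion h)
    · intro hX
      exact hX S (subset_refl S)
  · intro X
    constructor
    · intro hX n
      exact hX.pb_comp (fun i : Fin n => (i : ℕ))
    · exact isCombLevy_of_restr

end CLP
end
end

section
/- Every combinatorial Lévy process has the Feller property: its Markov semigroup Q_t g(M) := E g(X_t Δ M) satisfies (i) lim_{t↓0} Q_t g(M) = g(M) for every M, and (ii) M ↦ Q_t g(M) is continuous for every t > 0, for all bounded continuous g : L_S → ℝ. -/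
/-!
STATEMENT 8 (Corollary 4.10): every combinatorial Lévy process has the Feller property:
for every bounded continuous `g : L_S → ℝ`, the semigroup `Q_t g(M) := E g(X_t Δ M)`
satisfies `lim_{t↓0} Q_t g(M) = g(M)` for every `M` and `M ↦ Q_t g(M)` is continuous for
every `t > 0`.
-/

open MeasureTheory ProbabilityTheory Filter Topology
open scoped ENNReal NNReal
noncomputable section
namespace CLP

variable {k : ℕ}

lemma inc_empty {ar : Fin k → ℕ} {α : Type} (M : Struct ar α) : inc (emptyS ar α) M = M := by
  funext j a; simp [inc, emptyS]

lemma continuous_inc_left {ar : Fin k → ℕ} {α : Type} (M : Struct ar α) :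
    Continuous fun N : Struct ar α => inc N M := by
  refine continuous_pi fun j => continuous_pi fun a => ?_
  exact (continuous_of_discreteTopology (f := fun b : Bool => xor b (M j a))).comp
    ((continuous_apply a).comp (continuous_apply j))

lemma continuous_inc_right {ar : Fin k → ℕ} {α : Type} (N : Struct ar α) :
    Continuous fun M : Struct ar α => inc N M := by
  refine continuous_pi fun j => continuous_pi fun a => ?_
  exact (continuous_of_discreteTopology (f := fun b : Bool => xor (N j a) b)).comp
    ((continuous_apply a).comp (continuous_apply j))

lemma measurable_inc_left {ar : Fin k → ℕ} {α : Type} (M : Struct ar α) :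
    Measurable fun N : Struct ar α => inc N M := by
  refine measurable_pi_lambda _ fun j => measurable_pi_lambda _ fun a => ?_
  exact (Measurable.of_discrete (f := fun b : Bool => xor b (M j a))).comp
    ((measurable_pi_apply a).comp (measurable_pi_apply j))

/-- **Corollary 4.10.** Every combinatorial Lévy process has the Feller property. -/
theorem comb_levy_feller
    (ar : Fin k → ℕ) (har : Monotone ar) (S : Set ℕ)
    {Ω : Type} [MeasurableSpace Ω] (P : Measure Ω) [IsProbabilityMeasure P]
    (X : ℝ≥0 → Ω → Struct ar ↥S) (hX : IsCombLevy ar ↥S X P)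
    (g : BoundedContinuousFunction (Struct ar ↥S) ℝ) :
    (∀ M : Struct ar ↥S,
      Tendsto (fun t : ℝ≥0 => ∫ ω, g (inc (X t ω) M) ∂P)
        (𝓝[>] (0 : ℝ≥0)) (𝓝 (g M))) ∧
    (∀ t : ℝ≥0, 0 < t →
      Continuous fun M : Struct ar ↥S => ∫ ω, g (inc (X t ω) M) ∂P) := by
  have hmeas : ∀ (t : ℝ≥0) (M : Struct ar ↥S),
      AEStronglyMeasurable (fun ω => g (inc (X t ω) M)) P := fun t M =>
    (g.continuous.measurable.comp ((measurable_inc_left M).comp (hX.measurable t)))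
      |>.aestronglyMeasurable
  have hbound : ∀ (t : ℝ≥0) (M : Struct ar ↥S), ∀ᵐ ω ∂P,
      ‖g (inc (X t ω) M)‖ ≤ ‖g‖ :=
    fun t M => Filter.Eventually.of_forall fun ω => g.norm_coe_le_norm _
  constructor
  · intro M
    have key : Tendsto (fun t : ℝ≥0 => ∫ ω, g (inc (X t ω) M) ∂P)
        (𝓝[>] (0 : ℝ≥0)) (𝓝 (∫ _ω, g M ∂P)) := by
      refine tendsto_integral_filter_of_dominated_convergence (fun _ => ‖g‖)
        (Filter.Eventually.of_forall fun t => hmeas t M)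
        (Filter.Eventually.of_forall fun t => hbound t M)
        (integrable_const _)
        (Filter.Eventually.of_forall fun ω => ?_)
      have h0 : Tendsto (fun u => X u ω) (𝓝[>] (0 : ℝ≥0)) (𝓝 (X 0 ω)) :=
        (hX.cadlag_right ω 0).tendsto.mono_left
          (nhdsWithin_mono _ Set.Ioi_subset_Ici_self)
      have hc : Tendsto (fun N : Struct ar ↥S => g (inc N M)) (𝓝 (X 0 ω)) (𝓝 (g M)) := by
        have := (g.continuous.comp (continuous_inc_left M)).tendsto (X 0 ω)
        simpa [hX.init ω, inc_empty, Function.comp_def] using this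
      exact hc.comp h0
    simpa [integral_const, measure_univ] using key
  · intro t _
    rw [continuous_iff_continuousAt]
    intro M
    refine tendsto_integral_filter_of_dominated_convergence (fun _ => ‖g‖)
      (Filter.Eventually.of_forall fun M' => hmeas t M')
      (Filter.Eventually.of_forall fun M' => hbound t M')
      (integrable_const _)
      (Filter.Eventually.of_forall fun ω => ?_)
    exact ((g.continuous.comp (continuous_inc_right (X t ω))).tendsto M)

end CLP
end
end
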